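/- Let V be a multiplicative unitary on a finite-dimensional Hilbert space H, and let ξ be a unit vector in H with H_ξ = {η : V(η⊗ξ) = η⊗ξ}. Then V(H_ξ ⊗ H_ξ) ⊆ H ⊗ H_ξ. -/

import Mathlib

/-!
For `a, b ∈ H_ξ` put `t = a ⊗ b ⊗ ξ`. Then `V₂₃ t = t` (as `b ∈ H_ξ`) and `V₁₃ t = t` (as `a ∈ H_ξ`),
so the pentagon equation applied to `t` reduces to `V₁₂ t = V₂₃ V₁₂ t`. As
`V₁₂ t = V(a ⊗ b) ⊗ ξ`, this says that every row `k ↦ V(a ⊗ b)(i, k)` lies in `H_ξ`, and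
`V(a ⊗ b) = ∑ᵢ eᵢ ⊗ (row i)`.
-/

open scoped InnerProductSpace ComplexOrder

noncomputable section

namespace MU

variable {ι : Type*} [Fintype ι] [DecidableEq ι]

/-- The elementary tensor `f ⊗ g` of two vectors, in the model
`H ⊗ H = EuclideanSpace ℂ (ι × ι)`. -/
def tens (f g : EuclideanSpace ℂ ι) : EuclideanSpace ℂ (ι × ι) :=
  WithLp.toLp 2 (fun p => f p.1 * g p.2)

/-- `g ↦ f ⊗ g` as a linear map. -/
def tensL (f : EuclideanSpace ℂ ι) :
    EuclideanSpace ℂ ι →ₗ[ℂ] EuclideanSpace ℂ (ι × ι) where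
  toFun g := tens f g
  map_add' x y := by
    ext p; simp [tens]; ring
  map_smul' c x := by
    ext p; simp [tens]; ring

/-- `f ↦ f ⊗ g` as a linear map. -/
def tensR (g : EuclideanSpace ℂ ι) :
    EuclideanSpace ℂ ι →ₗ[ℂ] EuclideanSpace ℂ (ι × ι) where
  toFun f := tens f g
  map_add' x y := by
    ext p; simp [tens]; ring
  map_smul' c x := by
    ext p; simp [tens]; ring

/-- Action of a matrix on a Euclidean space vector. -/
def appM {κ : Type*} [Fintype κ] (M : Matrix κ κ ℂ) (v : EuclideanSpace ℂ κ) :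
    EuclideanSpace ℂ κ :=
  WithLp.toLp 2 (fun i => ∑ j, M i j * v j)

/-- Action of a matrix as a linear map on the Euclidean space. -/
def mact {κ : Type*} [Fintype κ] (M : Matrix κ κ ℂ) :
    EuclideanSpace ℂ κ →ₗ[ℂ] EuclideanSpace ℂ κ where
  toFun := appM M
  map_add' x y := by
    ext p; simp [appM, mul_add, Finset.sum_add_distrib]
  map_smul' c x := by
    ext p; simp only [appM, PiLp.smul_apply, smul_eq_mul, Finset.mul_sum]
    exact Finset.sum_congr rfl fun j _ => by simp only [RingHom.id_apply]; ring

/-- The leg `V₁₂` on `H ⊗ H ⊗ H`. -/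
def leg12 (V : Matrix (ι × ι) (ι × ι) ℂ) : Matrix (ι × ι × ι) (ι × ι × ι) ℂ :=
  fun p q => V (p.1, p.2.1) (q.1, q.2.1) * (if p.2.2 = q.2.2 then 1 else 0)

/-- The leg `V₁₃` on `H ⊗ H ⊗ H`. -/
def leg13 (V : Matrix (ι × ι) (ι × ι) ℂ) : Matrix (ι × ι × ι) (ι × ι × ι) ℂ :=
  fun p q => V (p.1, p.2.2) (q.1, q.2.2) * (if p.2.1 = q.2.1 then 1 else 0)

/-- The leg `V₂₃` on `H ⊗ H ⊗ H`. -/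
def leg23 (V : Matrix (ι × ι) (ι × ι) ℂ) : Matrix (ι × ι × ι) (ι × ι × ι) ℂ :=
  fun p q => V (p.2.1, p.2.2) (q.2.1, q.2.2) * (if p.1 = q.1 then 1 else 0)

/-- The pentagon equation `V₁₂ V₁₃ V₂₃ = V₂₃ V₁₂`. -/
def Pentagon (V : Matrix (ι × ι) (ι × ι) ℂ) : Prop :=
  leg12 V * leg13 V * leg23 V = leg23 V * leg12 V

/-- `V` is a multiplicative unitary: a unitary satisfying the pentagon equation. -/
def IsMU (V : Matrix (ι × ι) (ι × ι) ℂ) : Prop :=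
  V * V.conjTranspose = 1 ∧ V.conjTranspose * V = 1 ∧ Pentagon V

/-- `ξ` is a fixed vector for `V`. -/
def Fixed (V : Matrix (ι × ι) (ι × ι) ℂ) (ξ : EuclideanSpace ℂ ι) : Prop :=
  ∀ η, mact V (tens ξ η) = tens ξ η

/-- `ξ` is a cofixed vector for `V`. -/
def Cofixed (V : Matrix (ι × ι) (ι × ι) ℂ) (ξ : EuclideanSpace ℂ ι) : Prop :=
  ∀ η, mact V (tens η ξ) = tens η ξ

/-- `V` has multiplicity 1, with fixed unit vector `e` and cofixed unit vector `eHat`. -/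
def Mult1 (V : Matrix (ι × ι) (ι × ι) ℂ) (e eHat : EuclideanSpace ℂ ι) : Prop :=
  ‖e‖ = 1 ∧ ‖eHat‖ = 1 ∧ Fixed V e ∧ Cofixed V eHat ∧
    (∀ ξ, Fixed V ξ → ∃ c : ℂ, ξ = c • e) ∧
    (∀ ξ, Cofixed V ξ → ∃ c : ℂ, ξ = c • eHat)

/-- A pre-subgroup of `V` (with fixed vector `e`): a unit vector `f` with
`⟨f,e⟩ > 0` and `V(f⊗f) = f⊗f`. -/
def IsPreSubgroup (V : Matrix (ι × ι) (ι × ι) ℂ) (e f : EuclideanSpace ℂ ι) : Prop :=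
  ‖f‖ = 1 ∧ 0 < ⟪f, e⟫_ℂ ∧ mact V (tens f f) = tens f f

/-- The subspace `H^f = {η : V(f⊗η) = f⊗η}`. -/
def subUp (V : Matrix (ι × ι) (ι × ι) ℂ) (f : EuclideanSpace ℂ ι) :
    Submodule ℂ (EuclideanSpace ℂ ι) :=
  LinearMap.ker ((mact V).comp (tensL f) - tensL f)

/-- The subspace `H_f = {η : V(η⊗f) = η⊗f}`. -/
def subDown (V : Matrix (ι × ι) (ι × ι) ℂ) (f : EuclideanSpace ℂ ι) :
    Submodule ℂ (EuclideanSpace ℂ ι) :=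
  LinearMap.ker ((mact V).comp (tensR f) - tensR f)

/-- The slice `L(ω_{ξ,η}) = (ω_{ξ,η} ⊗ id)(V)`. -/
def Lslice (V : Matrix (ι × ι) (ι × ι) ℂ) (ξ η : EuclideanSpace ℂ ι) : Matrix ι ι ℂ :=
  fun a b => ∑ x, ∑ y, (starRingEnd ℂ) (ξ x) * η y * V (x, a) (y, b)

/-- The slice `ρ(ω_{ξ,η}) = (id ⊗ ω_{ξ,η})(V)`. -/
def Rslice (V : Matrix (ι × ι) (ι × ι) ℂ) (ξ η : EuclideanSpace ℂ ι) : Matrix ι ι ℂ :=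
  fun a b => ∑ x, ∑ y, (starRingEnd ℂ) (ξ x) * η y * V (a, x) (b, y)

/-- The slice `L(ω) = (ω ⊗ id)(V)` of a general linear functional `ω` on `L(H)`. -/
def LslF (V : Matrix (ι × ι) (ι × ι) ℂ) (ω : Matrix ι ι ℂ →ₗ[ℂ] ℂ) : Matrix ι ι ℂ :=
  fun a b => ω (fun x y => V (x, a) (y, b))

/-- A state on `L(H)`: a unital positive linear functional. -/
def IsState (ω : Matrix ι ι ℂ →ₗ[ℂ] ℂ) : Prop :=
  ω 1 = 1 ∧ ∀ M : Matrix ι ι ℂ, M.PosSemidef → ∃ r : ℝ, 0 ≤ r ∧ ω M = r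

end MU

namespace MU

lemma appM_mul {κ : Type*} [Fintype κ] (A B : Matrix κ κ ℂ) (v : EuclideanSpace ℂ κ) :
    appM (A * B) v = appM A (appM B v) := by
  ext i
  simp only [appM, Matrix.mul_apply, Finset.sum_mul, Finset.mul_sum, mul_assoc]
  exact Finset.sum_comm

variable {ι : Type*}

def tensLeg1 (x : EuclideanSpace ℂ ι) (s : EuclideanSpace ℂ (ι × ι)) :
    EuclideanSpace ℂ (ι × ι × ι) :=
  WithLp.toLp 2 (fun p => x p.1 * s p.2)

def tensLeg3 (u : EuclideanSpace ℂ (ι × ι)) (y : EuclideanSpace ℂ ι) :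
    EuclideanSpace ℂ (ι × ι × ι) :=
  WithLp.toLp 2 (fun p => u (p.1, p.2.1) * y p.2.2)

def row (u : EuclideanSpace ℂ (ι × ι)) (i : ι) : EuclideanSpace ℂ ι :=
  WithLp.toLp 2 (fun k => u (i, k))

lemma tensLeg1_tens (a b c : EuclideanSpace ℂ ι) :
    tensLeg1 a (tens b c) = tensLeg3 (tens a b) c := by
  ext p
  simp only [tensLeg1, tensLeg3, tens, mul_assoc]

section

variable [Fintype ι]

lemma mem_subDown_iff {V : Matrix (ι × ι) (ι × ι) ℂ} {ξ η : EuclideanSpace ℂ ι} :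
    η ∈ subDown V ξ ↔ appM V (tens η ξ) = tens η ξ := by
  rw [subDown, LinearMap.mem_ker, LinearMap.sub_apply, LinearMap.comp_apply, sub_eq_zero]
  rfl

variable [DecidableEq ι]

lemma sum_tens_single_row (u : EuclideanSpace ℂ (ι × ι)) :
    ∑ i, tens (EuclideanSpace.single i 1) (row u i) = u := by
  ext p
  simp [tens, row, WithLp.ofLp_sum, Finset.sum_apply]

variable (V : Matrix (ι × ι) (ι × ι) ℂ)

lemma appM_leg23_apply (s : EuclideanSpace ℂ (ι × ι × ι)) (i : ι) (p : ι × ι) :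
    appM (leg23 V) s (i, p) = ∑ q : ι × ι, V p q * s (i, q) := by
  simp only [appM, leg23, Fintype.sum_prod_type, mul_ite, mul_one, mul_zero, ite_mul, zero_mul]
  simp [Finset.sum_ite_eq]

lemma appM_leg23_tensLeg1 (x : EuclideanSpace ℂ ι) (s : EuclideanSpace ℂ (ι × ι)) :
    appM (leg23 V) (tensLeg1 x s) = tensLeg1 x (appM V s) := by
  ext ⟨i, p⟩
  rw [appM_leg23_apply]
  simp only [tensLeg1, appM, Finset.mul_sum]
  exact Finset.sum_congr rfl fun q _ => by ring

lemma appM_leg12_tensLeg3 (u : EuclideanSpace ℂ (ι × ι)) (y : EuclideanSpace ℂ ι) :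
    appM (leg12 V) (tensLeg3 u y) = tensLeg3 (appM V u) y := by
  ext p
  simp only [appM, leg12, tensLeg3, Fintype.sum_prod_type, mul_ite, mul_one, mul_zero,
    ite_mul, zero_mul, Finset.sum_ite_eq, Finset.mem_univ, if_true, Finset.sum_mul]
  exact Finset.sum_congr rfl fun _ _ => Finset.sum_congr rfl fun _ _ => by ring

lemma appM_leg13_tensLeg3_of_fixed {a c : EuclideanSpace ℂ ι} (h : appM V (tens a c) = tens a c)
    (b : EuclideanSpace ℂ ι) :
    appM (leg13 V) (tensLeg3 (tens a b) c) = tensLeg3 (tens a b) c := by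
  ext ⟨i, j, k⟩
  have hik : ∑ q : ι × ι, V (i, k) q * (a q.1 * c q.2) = a i * c k :=
    congrFun (congrArg WithLp.ofLp h) (i, k)
  calc appM (leg13 V) (tensLeg3 (tens a b) c) (i, j, k)
      = ∑ q : ι × ι, b j * (V (i, k) q * (a q.1 * c q.2)) := by
        simp only [appM, leg13, tensLeg3, tens, Fintype.sum_prod_type, mul_ite, mul_one, mul_zero,
          ite_mul, zero_mul]
        refine Finset.sum_congr rfl fun x _ => ?_
        rw [Finset.sum_comm]
        simp only [Finset.sum_ite_eq, Finset.mem_univ, if_true]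
        exact Finset.sum_congr rfl fun _ _ => by ring
    _ = tensLeg3 (tens a b) c (i, j, k) := by
        rw [← Finset.mul_sum, hik]
        simp only [tensLeg3, tens]
        ring

lemma appM_leg23_tensLeg3_appM_tens (hP : Pentagon V) {ξ a b : EuclideanSpace ℂ ι}
    (ha : a ∈ subDown V ξ) (hb : b ∈ subDown V ξ) :
    appM (leg23 V) (tensLeg3 (appM V (tens a b)) ξ) = tensLeg3 (appM V (tens a b)) ξ := by
  have h23 : appM (leg23 V) (tensLeg3 (tens a b) ξ) = tensLeg3 (tens a b) ξ := by
    rw [← tensLeg1_tens, appM_leg23_tensLeg1, mem_subDown_iff.mp hb]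
  have h13 : appM (leg13 V) (tensLeg3 (tens a b) ξ) = tensLeg3 (tens a b) ξ :=
    appM_leg13_tensLeg3_of_fixed V (mem_subDown_iff.mp ha) b
  have hpent := congrArg (fun M => appM M (tensLeg3 (tens a b) ξ)) hP
  simp only [appM_mul, h23, h13, appM_leg12_tensLeg3] at hpent
  exact hpent.symm

lemma row_mem_subDown_of_appM_leg23 {u : EuclideanSpace ℂ (ι × ι)} {ξ : EuclideanSpace ℂ ι}
    (h : appM (leg23 V) (tensLeg3 u ξ) = tensLeg3 u ξ) (i : ι) :
    row u i ∈ subDown V ξ := by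
  rw [mem_subDown_iff]
  ext p
  have hip := congrFun (congrArg WithLp.ofLp h) (i, p)
  rw [appM_leg23_apply] at hip
  exact hip

end

theorem map_tensor_subDown_le_general {ι : Type*} [Fintype ι] [DecidableEq ι]
    (V : Matrix (ι × ι) (ι × ι) ℂ) (hV : IsMU V)
    (ξ : EuclideanSpace ℂ ι) :
    Submodule.map (mact V) (Submodule.span ℂ
        {w | ∃ a ∈ subDown V ξ, ∃ b ∈ subDown V ξ, w = tens a b}) ≤
      Submodule.span ℂ
        {w | ∃ a : EuclideanSpace ℂ ι, ∃ b ∈ subDown V ξ, w = tens a b} := by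
  rw [Submodule.map_span, Submodule.span_le]
  rintro _ ⟨_, ⟨a, ha, b, hb, rfl⟩, rfl⟩
  have hrow := row_mem_subDown_of_appM_leg23 V (appM_leg23_tensLeg3_appM_tens V hV.2.2 ha hb)
  rw [← sum_tens_single_row (mact V (tens a b))]
  exact Submodule.sum_mem _ fun i _ => Submodule.subset_span ⟨_, _, hrow i, rfl⟩

/-- `V(H_ξ ⊗ H_ξ) ⊆ H ⊗ H_ξ`. -/
theorem map_tensor_subDown_le {ι : Type*} [Fintype ι] [DecidableEq ι] [Nonempty ι]
    (V : Matrix (ι × ι) (ι × ι) ℂ) (hV : IsMU V)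
    (ξ : EuclideanSpace ℂ ι) (hξ : ‖ξ‖ = 1) :
    Submodule.map (mact V) (Submodule.span ℂ
        {w | ∃ a ∈ subDown V ξ, ∃ b ∈ subDown V ξ, w = tens a b}) ≤
      Submodule.span ℂ
        {w | ∃ a : EuclideanSpace ℂ ι, ∃ b ∈ subDown V ξ, w = tens a b} :=
  map_tensor_subDown_le_general V hV ξ

end MU
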